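/- arXiv:2302.12447 — 3 statements merged into one kernel-verified Lean document; each statement's English description precedes it below -/
import Mathlib

section
/- For every prime power q and every integer s ≥ 1, the infinite product ∏_{j=s}^∞ (1 − q^{−j}) is strictly greater than 1 − τ(q^{−s}). -/
/-- `τ(x) := min(0.72, 2.1·x)`. -/
noncomputable def tau (x : ℝ) : ℝ := min 0.72 (2.1 * x)

/-!
The partial product over `j < k` times the Weierstrass bound `1 - ∑_{j ≥ k} q^{-(s+j)}` on the
tail bounds the product from below. With `k = 0` this gives `1 - q^{-s}/(1 - q^{-1}) ≥ 1 - 2q^{-s}`,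
which beats `1 - 2.1 q^{-s}`. The constant `0.72` is active only when `q^{-s} > 12/35`, i.e. for
`q = 2, s = 1`, where `k = 2` gives the product `≥ 9/32 > 0.28`.
-/

open Finset

lemma Finset.one_sub_sum_le_prod_one_sub {ι : Type*} (a : ι → ℝ) (h0 : ∀ i, 0 ≤ a i)
    (h1 : ∀ i, a i ≤ 1) (t : Finset ι) : 1 - ∑ i ∈ t, a i ≤ ∏ i ∈ t, (1 - a i) := by
  induction t using Finset.cons_induction with
  | empty => simp
  | cons x t _ ih =>
    rw [sum_cons, prod_cons]
    have hsum : 0 ≤ ∑ i ∈ t, a i := sum_nonneg fun i _ => h0 i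
    have hprod : 0 ≤ ∏ i ∈ t, (1 - a i) := prod_nonneg fun i _ => sub_nonneg.2 (h1 i)
    nlinarith [h0 x, h1 x]

namespace Real

variable {ι : Type*} {a : ι → ℝ}

lemma multipliable_one_sub_of_summable (ha : Summable a) : Multipliable fun i => 1 - a i := by
  simpa only [sub_eq_add_neg] using Real.multipliable_one_add_of_summable ha.neg

lemma one_sub_tsum_le_tprod_one_sub (ha : Summable a) (h0 : ∀ i, 0 ≤ a i) (h1 : ∀ i, a i ≤ 1) :
    1 - ∑' i, a i ≤ ∏' i, (1 - a i) :=
  le_hasProd_of_le_prod (multipliable_one_sub_of_summable ha).hasProd fun t =>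
    (sub_le_sub_left (ha.sum_le_tsum t fun i _ => h0 i) 1).trans
      (t.one_sub_sum_le_prod_one_sub a h0 h1)

lemma hasSum_pow_add {r : ℝ} (hr0 : 0 ≤ r) (hr1 : r < 1) (m : ℕ) :
    HasSum (fun j : ℕ => r ^ (m + j)) (r ^ m / (1 - r)) := by
  simpa only [pow_add, div_eq_mul_inv] using
    (hasSum_geometric_of_lt_one hr0 hr1).mul_left (r ^ m)

lemma one_sub_geom_le_tprod {r : ℝ} (hr0 : 0 ≤ r) (hr1 : r < 1) (m : ℕ) :
    1 - r ^ m / (1 - r) ≤ ∏' j : ℕ, (1 - r ^ (m + j)) := by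
  rw [← (hasSum_pow_add hr0 hr1 m).tsum_eq]
  exact one_sub_tsum_le_tprod_one_sub (hasSum_pow_add hr0 hr1 m).summable
    (fun j => pow_nonneg hr0 _) fun j => pow_le_one₀ hr0 hr1.le

lemma prod_range_mul_one_sub_geom_le_tprod {r : ℝ} (hr0 : 0 ≤ r) (hr1 : r < 1) (m k : ℕ) :
    (∏ j ∈ range k, (1 - r ^ (m + j))) * (1 - r ^ (m + k) / (1 - r)) ≤
      ∏' j : ℕ, (1 - r ^ (m + j)) := by
  have hshift (j : ℕ) : m + (j + k) = m + k + j := by rw [add_comm j k, add_assoc]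
  have htail : Multipliable fun j : ℕ => 1 - r ^ (m + (j + k)) := by
    simp only [hshift]
    exact multipliable_one_sub_of_summable (hasSum_pow_add hr0 hr1 (m + k)).summable
  rw [← Multipliable.prod_mul_tprod_nat_mul' (f := fun j => 1 - r ^ (m + j)) htail]
  refine mul_le_mul_of_nonneg_left ?_ <|
    prod_nonneg fun j _ => sub_nonneg.2 (pow_le_one₀ hr0 hr1.le)
  simp only [hshift]
  exact one_sub_geom_le_tprod hr0 hr1 (m + k)

end Real

lemma eq_two_and_eq_one_of_pow_lt_three {q s : ℕ} (hq : 2 ≤ q) (hs : 1 ≤ s) (h : q ^ s < 3) :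
    q = 2 ∧ s = 1 := by
  have hq2 : q = 2 := by
    have := Nat.le_self_pow (by omega : s ≠ 0) q
    omega
  subst hq2
  have : 2 ^ s < 2 ^ 2 := by omega
  exact ⟨rfl, by have := (Nat.pow_lt_pow_iff_right (by norm_num)).1 this; omega⟩

/-- For every prime power `q` and every integer `s ≥ 1`, the infinite product
`∏_{j=s}^∞ (1 − q^{−j})` is strictly greater than `1 − τ(q^{−s})`. -/
theorem stmt0 (q : ℕ) (hq : IsPrimePow q) (s : ℕ) (hs : 1 ≤ s) :
    1 - tau ((q : ℝ)⁻¹ ^ s) < ∏' j : ℕ, (1 - (q : ℝ)⁻¹ ^ (s + j)) := by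
  have hq2 : (2 : ℝ) ≤ q := by exact_mod_cast hq.two_le
  have hr0 : (0 : ℝ) ≤ (q : ℝ)⁻¹ := by positivity
  have hr : (q : ℝ)⁻¹ ≤ 2⁻¹ := inv_anti₀ (by norm_num) hq2
  have hx : 0 < (q : ℝ)⁻¹ ^ s := by positivity
  rcases le_or_gt (2.1 * (q : ℝ)⁻¹ ^ s) 0.72 with hsmall | hlarge
  · rw [tau, min_eq_right hsmall]
    have hgeom : (q : ℝ)⁻¹ ^ s / (1 - (q : ℝ)⁻¹) ≤ 2 * (q : ℝ)⁻¹ ^ s := by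
      rw [div_le_iff₀ (by linarith)]
      nlinarith
    linarith [Real.one_sub_geom_le_tprod hr0 (by linarith) s]
  · rw [tau, min_eq_left hlarge.le]
    have hpow : q ^ s < 3 := by
      have hinv : 12 / 35 < ((q : ℝ) ^ s)⁻¹ := by rw [← inv_pow]; linarith
      have : (q : ℝ) ^ s < 35 / 12 := by
        simpa using (lt_inv_comm₀ (by norm_num) (by positivity)).1 hinv
      exact_mod_cast this.trans (by norm_num : (35 / 12 : ℝ) < 3)
    obtain ⟨rfl, rfl⟩ := eq_two_and_eq_one_of_pow_lt_three hq.two_le hs hpow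
    have := Real.prod_range_mul_one_sub_geom_le_tprod hr0 (by linarith) 1 2
    norm_num [prod_range_succ] at this ⊢
    linarith
end

section
/- Let q be a prime power and let m, n, k, r be positive integers with n ≥ 2r and k ≤ m(n−r). Fix K ∈ F_q^{r×(n−r)} such that the r × r matrix K_1 consisting of the first r columns of K is invertible. For (N_1, …, N_k) ∈ (F_q^{m×r})^k, let X ∈ F_q^{k×k} be the matrix whose (i,j) entry equals ⟨N_j K⟩_i, and set d := min(mr, k). Then the number of tuples (N_1, …, N_k) for which I_k − X is invertible equals (#GL_d(F_q)) · q^{kmr − d²}, where #GL_d(F_q) is the number of invertible d × d matrices over F_q. Equivalently, for independent uniformly random N_1, …, N_k, the probability that I_k − X is invertible equals the probability that a uniformly random d × d matrix over F_q is invertible. -/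
/-- Column-major vectorization `⟨A⟩` of a matrix. -/
def vecCM {F : Type*} {m n : ℕ} (A : Matrix (Fin m) (Fin n) F) : Fin (m * n) → F :=
  fun i => A ⟨i.1 % m, Nat.mod_lt _ (Nat.pos_of_ne_zero fun h => by
      have := i.2; simp [h] at this)⟩ ⟨i.1 / m, Nat.div_lt_of_lt_mul i.2⟩


namespace Stmt15Aux

/-- Pairing equivalence `Fin m × Fin r ≃ Fin (m*r)`, `(a,c) ↦ a + c*m`. -/
def pairEquiv (m r : ℕ) (hm : 0 < m) : Fin m × Fin r ≃ Fin (m * r) where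
  toFun x := ⟨x.1.1 + x.2.1 * m, by
    have h2 : (x.2.1 + 1) * m ≤ r * m := Nat.mul_le_mul_right m x.2.2
    have h3 := x.1.2
    have : x.1.1 + x.2.1 * m < (x.2.1 + 1) * m := by rw [Nat.succ_mul]; omega
    calc x.1.1 + x.2.1 * m < (x.2.1 + 1) * m := this
      _ ≤ r * m := h2
      _ = m * r := Nat.mul_comm r m⟩
  invFun t := (⟨t.1 % m, Nat.mod_lt _ hm⟩, ⟨t.1 / m, Nat.div_lt_of_lt_mul t.2⟩)
  left_inv x := by
    obtain ⟨a, c⟩ := x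
    have h1 : (a.1 + c.1 * m) % m = a.1 := by
      rw [Nat.add_mul_mod_self_right, Nat.mod_eq_of_lt a.2]
    have h2 : (a.1 + c.1 * m) / m = c.1 := by
      rw [Nat.add_mul_div_right _ _ hm, Nat.div_eq_of_lt a.2, Nat.zero_add]
    simp only [Prod.mk.injEq]
    exact ⟨Fin.ext h1, Fin.ext h2⟩
  right_inv t := Fin.ext (Nat.mod_add_div' t.1 m)

@[simp] lemma pairEquiv_val {m r : ℕ} (hm : 0 < m) (a : Fin m) (c : Fin r) :
    ((pairEquiv m r hm) (a, c)).1 = a.1 + c.1 * m := rfl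

lemma pairEquiv_mod {m r : ℕ} (hm : 0 < m) (a : Fin m) (c : Fin r) :
    ((pairEquiv m r hm) (a, c)).1 % m = a.1 := by
  rw [pairEquiv_val, Nat.add_mul_mod_self_right, Nat.mod_eq_of_lt a.2]

lemma pairEquiv_div {m r : ℕ} (hm : 0 < m) (a : Fin m) (c : Fin r) :
    ((pairEquiv m r hm) (a, c)).1 / m = c.1 := by
  rw [pairEquiv_val, Nat.add_mul_div_right _ _ hm, Nat.div_eq_of_lt a.2, Nat.zero_add]

/-- Split a tuple of length `a` into the first `k` and last `a - k` entries. -/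
def rowSplit (γ : Type*) (a k : ℕ) (h : k ≤ a) :
    (Fin a → γ) ≃ (Fin k → γ) × (Fin (a - k) → γ) where
  toFun f := (fun i => f (Fin.castLE h i), fun i => f ⟨k + i.1, by omega⟩)
  invFun p t := if ht : t.1 < k then p.1 ⟨t.1, ht⟩ else p.2 ⟨t.1 - k, by omega⟩
  left_inv f := by
    funext t
    dsimp only
    split_ifs with ht
    · rfl
    · congr 1; exact Fin.ext (by simp; omega)
  right_inv p := by
    obtain ⟨f, g⟩ := p
    simp only [Prod.mk.injEq]
    constructor
    · funext i
      have : (Fin.castLE h i).1 < k := i.2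
      simp only [this, dif_pos]
      congr 1
    · funext i
      have h1 : ¬ (k + i.1 < k) := by omega
      simp only [h1, dif_neg, not_false_iff]
      congr 1
      exact Fin.ext (by simp)

lemma card_pair {α β : Type*} (p : α → Prop) :
    Nat.card {x : α × β // p x.1} = Nat.card {a : α // p a} * Nat.card β := by
  rw [← Nat.card_prod]
  exact Nat.card_congr
    ⟨fun x => (⟨x.1.1, x.2⟩, x.1.2), fun y => ⟨(y.1.1, y.2), y.1.2⟩,
     fun x => rfl, fun y => rfl⟩

lemma card_one_sub {R : Type*} [Ring R] :
    Nat.card {A : R // IsUnit (1 - A)} = Nat.card {B : R // IsUnit B} :=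
  Nat.card_congr (Equiv.subtypeEquiv (Equiv.subLeft (1 : R)) (fun _ => Iff.rfl))


variable {F : Type*} [CommRing F]

/-- `lift A = Aᵀ ⊗ I_m` in column-major coordinates. -/
def lift (m r : ℕ) (A : Matrix (Fin r) (Fin r) F) : Matrix (Fin (m * r)) (Fin (m * r)) F :=
  Matrix.of fun i t => if t.1 % m = i.1 % m then
    A ⟨t.1 / m, Nat.div_lt_of_lt_mul t.2⟩ ⟨i.1 / m, Nat.div_lt_of_lt_mul i.2⟩ else 0

lemma lift_mul (m r : ℕ) (hm : 0 < m) (A B : Matrix (Fin r) (Fin r) F) :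
    lift m r A * lift m r B = lift m r (B * A) := by
  ext i s
  rw [Matrix.mul_apply, ← Equiv.sum_comp (pairEquiv m r hm), Fintype.sum_prod_type]
  simp only [lift, Matrix.of_apply, pairEquiv_mod hm, pairEquiv_div hm]
  by_cases hsi : s.1 % m = i.1 % m
  · rw [if_pos hsi, Matrix.mul_apply]
    rw [Finset.sum_eq_single (⟨i.1 % m, Nat.mod_lt _ hm⟩ : Fin m)]
    · simp only [if_pos rfl, if_pos hsi]
      exact Finset.sum_congr rfl fun c _ => by simp only [if_true, Fin.eta]; ring
    · intro a _ ha
      have : ¬ (a.1 = i.1 % m) := fun h => ha (Fin.ext h)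
      simp [this]
    · intro h; exact absurd (Finset.mem_univ _) h
  · rw [if_neg hsi]
    refine Finset.sum_eq_zero fun a _ => Finset.sum_eq_zero fun c _ => ?_
    by_cases ha : a.1 = i.1 % m
    · rw [if_pos ha, if_neg (by omega)]
      exact mul_zero _
    · rw [if_neg ha]
      exact zero_mul _

lemma lift_one (m r : ℕ) (hm : 0 < m) : lift m r (1 : Matrix (Fin r) (Fin r) F) = 1 := by
  ext i s
  simp only [lift, Matrix.of_apply, Matrix.one_apply]
  by_cases h1 : s.1 % m = i.1 % m
  · rw [if_pos h1]
    by_cases h2 : s.1 / m = i.1 / m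
    · have : i = s := by
        refine Fin.ext ?_
        conv_lhs => rw [← Nat.mod_add_div' i.1 m]
        conv_rhs => rw [← Nat.mod_add_div' s.1 m]
        rw [h1, h2]
      rw [if_pos (Fin.ext h2), if_pos this]
    · have : i ≠ s := fun h => h2 (by rw [h])
      rw [if_neg (fun h => h2 (congrArg Fin.val h)), if_neg this]
  · rw [if_neg h1, if_neg (fun h : i = s => h1 (by rw [h]))]

lemma lift_isUnit {m r : ℕ} (hm : 0 < m) {A : Matrix (Fin r) (Fin r) F}
    (hA : IsUnit A) : IsUnit (lift m r A) := by
  have h1 : (↑hA.unit⁻¹ : Matrix (Fin r) (Fin r) F) * A = 1 := hA.val_inv_mul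
  have h2 : A * (↑hA.unit⁻¹ : Matrix (Fin r) (Fin r) F) = 1 := hA.mul_val_inv
  exact ⟨⟨lift m r A, lift m r (↑hA.unit⁻¹ : Matrix (Fin r) (Fin r) F),
    by rw [lift_mul m r hm, h1, lift_one m r hm],
    by rw [lift_mul m r hm, h2, lift_one m r hm]⟩, rfl⟩

/-- Column-major vectorization of tuples of matrices, as an equivalence. -/
def vecEquiv (F : Type*) (m r k : ℕ) (hm : 0 < m) :
    (Fin k → Matrix (Fin m) (Fin r) F) ≃ Matrix (Fin (m * r)) (Fin k) F where
  toFun N := Matrix.of fun t j =>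
    N j ⟨t.1 % m, Nat.mod_lt _ hm⟩ ⟨t.1 / m, Nat.div_lt_of_lt_mul t.2⟩
  invFun M := fun j => Matrix.of fun a c => M (pairEquiv m r hm (a, c)) j
  left_inv N := by
    funext j
    ext a c
    simp only [Matrix.of_apply]
    congr 1
    · exact Fin.ext (pairEquiv_mod hm a c)
    · exact Fin.ext (pairEquiv_div hm a c)
  right_inv M := by
    ext t j
    simp only [Matrix.of_apply]
    congr 1
    exact Fin.ext (Nat.mod_add_div' t.1 m)

end Stmt15Aux

/-- Let `F` be a finite field of cardinality `q` and `m, n, k, r ≥ 1` with `n ≥ 2r` and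
`k ≤ m(n−r)`.  Fix `K ∈ F^{r×(n−r)}` whose first-`r`-columns block `K₁` is invertible.
For `(N_1, …, N_k) ∈ (F^{m×r})^k`, let `X ∈ F^{k×k}` have `(i,j)` entry `⟨N_j K⟩_i`, and
set `d := min(mr, k)`.  Then the number of tuples `(N_1, …, N_k)` for which `I_k − X` is
invertible equals `#GL_d(F) · q^{kmr − d²}`. -/
theorem stmt15 (F : Type*) [Field F] [Fintype F] (m n k r : ℕ)
    (hm : 0 < m) (hn : 0 < n) (hk : 0 < k) (hr : 0 < r)
    (h2r : 2 * r ≤ n) (hkm : k ≤ m * (n - r))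
    (K : Matrix (Fin r) (Fin (n - r)) F)
    (hK1 : IsUnit (Matrix.of fun i j : Fin r => K i ⟨j.1, by have := j.2; omega⟩)) :
    Nat.card {N : Fin k → Matrix (Fin m) (Fin r) F //
        IsUnit ((1 : Matrix (Fin k) (Fin k) F) -
          Matrix.of fun i j : Fin k => vecCM (N j * K) (Fin.castLE hkm i))} =
      Nat.card {B : Matrix (Fin (min (m * r) k)) (Fin (min (m * r) k)) F // IsUnit B} *
        Fintype.card F ^ (k * (m * r) - min (m * r) k ^ 2) := by
  classical
  have hrn : r ≤ n - r := by omega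
  set K₁ : Matrix (Fin r) (Fin r) F :=
    Matrix.of (fun i j : Fin r => K i ⟨j.1, by have := j.2; omega⟩) with hK₁def
  have hK1' : IsUnit K₁ := hK1
  set Q₁ : Matrix (Fin (m * r)) (Fin (m * r)) F := Stmt15Aux.lift m r K₁ with hQdef
  have hQ : IsUnit Q₁ := Stmt15Aux.lift_isUnit hm hK1'
  set Psub : Matrix (Fin k) (Fin (m * r)) F := Matrix.of fun i t =>
    if t.1 % m = i.1 % m then
      K ⟨t.1 / m, Nat.div_lt_of_lt_mul t.2⟩
        ⟨i.1 / m, Nat.div_lt_of_lt_mul (Nat.lt_of_lt_of_le i.2 hkm)⟩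
    else 0 with hPdef
  -- Step B: the matrix in the statement is `Psub * vec(N)`
  have hX : ∀ N : Fin k → Matrix (Fin m) (Fin r) F,
      (Matrix.of fun i j : Fin k => vecCM (N j * K) (Fin.castLE hkm i)) =
        Psub * Stmt15Aux.vecEquiv F m r k hm N := by
    intro N
    ext i j
    rw [Matrix.of_apply, Matrix.mul_apply, ← Equiv.sum_comp (Stmt15Aux.pairEquiv m r hm),
      Fintype.sum_prod_type]
    show (N j * K) _ _ = _
    rw [Matrix.mul_apply]
    simp only [hPdef, Matrix.of_apply, Stmt15Aux.vecEquiv, Equiv.coe_fn_mk,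
      Stmt15Aux.pairEquiv_mod hm, Stmt15Aux.pairEquiv_div hm, Fin.coe_castLE, Fin.eta]
    symm
    rw [Finset.sum_eq_single (⟨i.1 % m, Nat.mod_lt _ hm⟩ : Fin m)]
    · refine Finset.sum_congr rfl fun c _ => ?_
      rw [if_pos rfl]
      ring
    · intro a _ ha
      have h : ¬ (a.1 = i.1 % m) := fun h => ha (Fin.ext h)
      refine Finset.sum_eq_zero fun c _ => ?_
      rw [if_neg h, zero_mul]
    · intro h; exact absurd (Finset.mem_univ _) h
  have step1 : Nat.card {N : Fin k → Matrix (Fin m) (Fin r) F //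
        IsUnit ((1 : Matrix (Fin k) (Fin k) F) -
          Matrix.of fun i j : Fin k => vecCM (N j * K) (Fin.castLE hkm i))} =
      Nat.card {M : Matrix (Fin (m * r)) (Fin k) F // IsUnit (1 - Psub * M)} :=
    Nat.card_congr (Equiv.subtypeEquiv (Stmt15Aux.vecEquiv F m r k hm)
      (fun N => by rw [hX N]))
  rw [step1]
  rcases le_total k (m * r) with hks | hsk
  · -- Case 1 : k ≤ m*r
    rw [min_eq_right hks, pow_two, ← Nat.mul_sub]
    have e1 : {M : Matrix (Fin (m * r)) (Fin k) F // IsUnit (1 - Psub * M)} ≃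
        {M : Matrix (Fin (m * r)) (Fin k) F //
          IsUnit ((1 : Matrix (Fin k) (Fin k) F) -
            Matrix.of fun i j => M (Fin.castLE hks i) j)} := by
      refine Equiv.subtypeEquiv
        ⟨fun M => Q₁ * M, fun M => (↑hQ.unit⁻¹ : Matrix (Fin (m * r)) (Fin (m * r)) F) * M,
         fun M => by dsimp only; rw [← Matrix.mul_assoc, hQ.val_inv_mul, Matrix.one_mul],
         fun M => by dsimp only; rw [← Matrix.mul_assoc, hQ.mul_val_inv, Matrix.one_mul]⟩
        (fun M => ?_)
      have hPM : Psub * M = Matrix.of fun i j => (Q₁ * M) (Fin.castLE hks i) j := by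
        ext i j
        rw [Matrix.of_apply, Matrix.mul_apply, Matrix.mul_apply]
        exact Finset.sum_congr rfl fun t _ => rfl
      rw [hPM]
      exact Iff.rfl
    rw [Nat.card_congr e1]
    have e2 : {M : Matrix (Fin (m * r)) (Fin k) F //
          IsUnit ((1 : Matrix (Fin k) (Fin k) F) -
            Matrix.of fun i j => M (Fin.castLE hks i) j)} ≃
        {p : (Fin k → Fin k → F) × (Fin (m * r - k) → Fin k → F) //
          IsUnit ((1 : Matrix (Fin k) (Fin k) F) - Matrix.of p.1)} :=
      Equiv.subtypeEquiv (Stmt15Aux.rowSplit (Fin k → F) (m * r) k hks) (fun M => Iff.rfl)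
    rw [Nat.card_congr e2, Stmt15Aux.card_pair
      (fun A => IsUnit ((1 : Matrix (Fin k) (Fin k) F) - Matrix.of A))]
    have e3 : {A : Fin k → Fin k → F //
          IsUnit ((1 : Matrix (Fin k) (Fin k) F) - Matrix.of A)} ≃
        {B : Matrix (Fin k) (Fin k) F // IsUnit (1 - B)} :=
      Equiv.subtypeEquiv Matrix.of (fun A => Iff.rfl)
    rw [Nat.card_congr e3, Stmt15Aux.card_one_sub]
    congr 1
    rw [Nat.card_eq_fintype_card, Fintype.card_fun, Fintype.card_fun,
      Fintype.card_fin, Fintype.card_fin, ← pow_mul]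
  · -- Case 2 : m*r ≤ k
    rw [min_eq_left hsk, pow_two, ← Nat.sub_mul]
    set P₂ : Matrix (Fin (k - m * r)) (Fin (m * r)) F :=
      Matrix.of fun j y => Psub ⟨m * r + j.1, lt_tsub_iff_left.mp j.2⟩ y with hP₂def
    set colSplit : Matrix (Fin (m * r)) (Fin k) F ≃
        (Fin (m * r) → Fin (m * r) → F) × (Fin (m * r) → Fin (k - m * r) → F) :=
      (Equiv.arrowCongr (Equiv.refl (Fin (m * r)))
        (Stmt15Aux.rowSplit F k (m * r) hsk)).trans
        (Equiv.arrowProdEquivProdArrow _ _ _) with hcsdef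
    set ek : Fin (m * r) ⊕ Fin (k - m * r) ≃ Fin k :=
      finSumFinEquiv.trans (finCongr (Nat.add_sub_cancel' hsk)) with hekdef
    have hek1 : ∀ c : Fin (m * r), ek (Sum.inl c) = Fin.castLE hsk c :=
      fun c => Fin.ext (by simp [hekdef])
    have hek2 : ∀ jj : Fin (k - m * r), ek (Sum.inr jj) = ⟨m * r + jj.1, lt_tsub_iff_left.mp jj.2⟩ :=
      fun jj => Fin.ext (by simp [hekdef])
    have hsplit : ∀ M : Matrix (Fin (m * r)) (Fin k) F,
        M * Psub = Matrix.of (colSplit M).1 * Q₁ + Matrix.of (colSplit M).2 * P₂ := by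
      intro M
      ext x y
      rw [Matrix.add_apply, Matrix.mul_apply, Matrix.mul_apply, Matrix.mul_apply,
        ← Equiv.sum_comp ek, Fintype.sum_sum_type]
      congr 1
    have e1 : {M : Matrix (Fin (m * r)) (Fin k) F // IsUnit (1 - Psub * M)} ≃
        {p : (Fin (m * r) → Fin (m * r) → F) × (Fin (m * r) → Fin (k - m * r) → F) //
          IsUnit ((1 : Matrix (Fin (m * r)) (Fin (m * r)) F) -
            (Matrix.of p.1 * Q₁ + Matrix.of p.2 * P₂))} :=
      Equiv.subtypeEquiv colSplit (fun M => by
        rw [Matrix.isUnit_iff_isUnit_det, Matrix.det_one_sub_mul_comm,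
          ← Matrix.isUnit_iff_isUnit_det, hsplit M])
    rw [Nat.card_congr e1]
    have e3 : {p : (Fin (m * r) → Fin (m * r) → F) × (Fin (m * r) → Fin (k - m * r) → F) //
          IsUnit ((1 : Matrix (Fin (m * r)) (Fin (m * r)) F) -
            (Matrix.of p.1 * Q₁ + Matrix.of p.2 * P₂))} ≃
        {p : (Fin (m * r) → Fin (m * r) → F) × (Fin (m * r) → Fin (k - m * r) → F) //
          IsUnit ((1 : Matrix (Fin (m * r)) (Fin (m * r)) F) - Matrix.of p.1)} :=
      Equiv.subtypeEquiv
      ⟨fun p => (Matrix.of.symm (Matrix.of p.1 * Q₁ + Matrix.of p.2 * P₂), p.2),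
       fun p => (Matrix.of.symm ((Matrix.of p.1 - Matrix.of p.2 * P₂) *
         (↑hQ.unit⁻¹ : Matrix (Fin (m * r)) (Fin (m * r)) F)), p.2),
       fun p => Prod.ext (by
         show ((Matrix.of p.1 * Q₁ + Matrix.of p.2 * P₂) - Matrix.of p.2 * P₂) *
           (↑hQ.unit⁻¹ : Matrix (Fin (m * r)) (Fin (m * r)) F) = Matrix.of p.1
         rw [add_sub_cancel_right, Matrix.mul_assoc, hQ.mul_val_inv, Matrix.mul_one]) rfl,
       fun p => Prod.ext (by
         show ((Matrix.of p.1 - Matrix.of p.2 * P₂) *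
           (↑hQ.unit⁻¹ : Matrix (Fin (m * r)) (Fin (m * r)) F)) * Q₁ + Matrix.of p.2 * P₂ =
             Matrix.of p.1
         rw [Matrix.mul_assoc, hQ.val_inv_mul, Matrix.mul_one, sub_add_cancel]) rfl⟩
      (fun p => Iff.rfl)
    rw [Nat.card_congr e3, Stmt15Aux.card_pair
      (fun A => IsUnit ((1 : Matrix (Fin (m * r)) (Fin (m * r)) F) - Matrix.of A))]
    have e4 : {A : Fin (m * r) → Fin (m * r) → F //
          IsUnit ((1 : Matrix (Fin (m * r)) (Fin (m * r)) F) - Matrix.of A)} ≃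
        {B : Matrix (Fin (m * r)) (Fin (m * r)) F // IsUnit (1 - B)} :=
      Equiv.subtypeEquiv Matrix.of (fun A => Iff.rfl)
    rw [Nat.card_congr e4, Stmt15Aux.card_one_sub]
    congr 1
    rw [Nat.card_eq_fintype_card, Fintype.card_fun, Fintype.card_fun,
      Fintype.card_fin, Fintype.card_fin, ← pow_mul]
end

section
/- Let q be a prime power and let m ≥ n > r ≥ 1 and k ≥ 1 be integers with k ≤ m(n−r). Let 𝒮 be the set of tuples (M_0, M_1, …, M_k, E, α_1, …, α_k) where M_0 ∈ 𝓒_0, (M_1, …, M_k) ∈ 𝓒_1, E ∈ F_q^{m×n} has rank r with E^R of rank r, and α_1, …, α_k ∈ F_q, such that: (i) E = M_0 + ∑_{i=1}^k α_i M_i, and (ii) letting K ∈ F_q^{r×(n−r)} be the unique matrix with E^L = E^R K, the k × k matrix with (i,j) entry δ_{i,j} − ⟨M_j^R K⟩_i is invertible and ∑_{j=1}^k (δ_{i,j} − ⟨M_j^R K⟩_i) α_j = ⟨M_0^R K⟩_i for all i ∈ {1, …, k}. Then the map sending each element of 𝒮 to the triple (M_0^R, (M_1, …, M_k), K) ∈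 F_q^{m×r} × 𝓒_1 × F_q^{r×(n−r)} is injective. -/
/-- The first `n - r` columns of a matrix (`A^L`). -/
def matL {F : Type*} {m n : ℕ} (r : ℕ) (hrn : r ≤ n) (A : Matrix (Fin m) (Fin n) F) :
    Matrix (Fin m) (Fin (n - r)) F :=
  fun i j => A i ⟨j.1, by have := j.2; omega⟩

/-- The last `r` columns of a matrix (`A^R`). -/
def matR {F : Type*} {m n : ℕ} (r : ℕ) (hrn : r ≤ n) (A : Matrix (Fin m) (Fin n) F) :
    Matrix (Fin m) (Fin r) F :=
  fun i j => A i ⟨n - r + j.1, by have := j.2; omega⟩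

/-- Membership in the set `𝒮`: `(M_0, M_1, …, M_k, E, α_1, …, α_k)` with `M_0 ∈ 𝓒₀`,
`(M_1, …, M_k) ∈ 𝓒₁`, `rank E = r`, `rank E^R = r`, `E = M_0 + ∑ α_i M_i`, and, `K` being
the (unique) matrix with `E^L = E^R K`, the matrix `(δ_{i,j} − ⟨M_j^R K⟩_i)_{i,j}` is
invertible and `α` is the (unique) solution of the system
`∑_j (δ_{i,j} − ⟨M_j^R K⟩_i) α_j = ⟨M_0^R K⟩_i` for all `i ≤ k`. -/
def memS {F : Type*} [Field F] (m n k r : ℕ) (hrn : r ≤ n) (hkmn : k ≤ m * n)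
    (hkm : k ≤ m * (n - r))
    (M0 : Matrix (Fin m) (Fin n) F) (M : Fin k → Matrix (Fin m) (Fin n) F)
    (E : Matrix (Fin m) (Fin n) F) (α : Fin k → F)
    (K : Matrix (Fin r) (Fin (n - r)) F) : Prop :=
  (∀ i : Fin k, vecCM M0 (Fin.castLE hkmn i) = 0) ∧
  (∀ i j : Fin k, vecCM (M i) (Fin.castLE hkmn j) = if i = j then 1 else 0) ∧
  E.rank = r ∧ (matR r hrn E).rank = r ∧
  E = M0 + ∑ i, α i • M i ∧
  matL r hrn E = matR r hrn E * K ∧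
  IsUnit (Matrix.of fun i j : Fin k =>
    (if i = j then (1 : F) else 0) - vecCM (matR r hrn (M j) * K) (Fin.castLE hkm i)) ∧
  (∀ i : Fin k, ∑ j : Fin k,
      ((if i = j then (1 : F) else 0) - vecCM (matR r hrn (M j) * K) (Fin.castLE hkm i)) * α j =
    vecCM (matR r hrn M0 * K) (Fin.castLE hkm i))

/-- Let `F` be a finite field, `m ≥ n > r ≥ 1`, `k ≥ 1`, `k ≤ m(n−r)`.  The map sending
each element `(M_0, M_1, …, M_k, E, α)` of `𝒮` (with associated `K`) to the triple
`(M_0^R, (M_1, …, M_k), K)` is injective. -/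
theorem stmt17 (F : Type*) [Field F] [Fintype F] (m n k r : ℕ)
    (hnm : n ≤ m) (hrn : r < n) (hr : 1 ≤ r) (hk : 1 ≤ k)
    (hkm : k ≤ m * (n - r)) (hkmn : k ≤ m * n)
    (M0 M0' E E' : Matrix (Fin m) (Fin n) F)
    (M M' : Fin k → Matrix (Fin m) (Fin n) F)
    (α α' : Fin k → F) (K K' : Matrix (Fin r) (Fin (n - r)) F)
    (h1 : memS m n k r hrn.le hkmn hkm M0 M E α K)
    (h2 : memS m n k r hrn.le hkmn hkm M0' M' E' α' K')
    (heqR : matR r hrn.le M0 = matR r hrn.le M0')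
    (heqM : M = M') (heqK : K = K') :
    M0 = M0' ∧ E = E' ∧ α = α' := by
  subst heqM heqK
  obtain ⟨-, -, -, -, hE, hEL, hInv, hSys⟩ := h1
  obtain ⟨-, -, -, -, hE', hEL', -, hSys'⟩ := h2
  set A : Matrix (Fin k) (Fin k) F := Matrix.of fun i j : Fin k =>
    (if i = j then (1 : F) else 0) - vecCM (matR r hrn.le (M j) * K) (Fin.castLE hkm i) with hA
  -- α = α'
  have hαα : α = α' := by
    have hb : matR r hrn.le M0 * K = matR r hrn.le M0' * K := by rw [heqR]
    have : A.mulVec α = A.mulVec α' := by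
      funext i
      simp only [Matrix.mulVec, dotProduct, hA, Matrix.of_apply]
      rw [hSys i, hSys' i, hb]
    exact Matrix.mulVec_injective_iff_isUnit.mpr hInv this
  subst hαα
  -- matR E = matR E'
  have hRE : matR r hrn.le E = matR r hrn.le E' := by
    funext i j
    have h0 : M0 i ⟨n - r + j.1, by omega⟩ = M0' i ⟨n - r + j.1, by omega⟩ :=
      congrFun (congrFun heqR i) j
    simp only [matR, hE, hE', Matrix.add_apply, Matrix.sum_apply, Matrix.smul_apply, h0]
  -- E = E'
  have hEE : E = E' := by
    funext i j
    by_cases hj : j.1 < n - r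
    · have hL : matL r hrn.le E i ⟨j.1, hj⟩ = matL r hrn.le E' i ⟨j.1, hj⟩ := by
        rw [hEL, hEL', hRE]
      simpa only [matL, Fin.eta] using hL
    · have hj2 : j.1 - (n - r) < r := by omega
      have hR : matR r hrn.le E i ⟨j.1 - (n - r), hj2⟩ =
          matR r hrn.le E' i ⟨j.1 - (n - r), hj2⟩ := by rw [hRE]
      have hfin : (⟨n - r + (j.1 - (n - r)), by omega⟩ : Fin n) = j := by
        apply Fin.ext; simp only [Fin.val_mk]; omega
      simpa only [matR, hfin] using hR
  refine ⟨?_, hEE, rfl⟩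
  have := hE'.symm.trans (hEE ▸ hE)
  exact (add_right_cancel this).symm
end
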